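/- arXiv:2307.16685 — 4 statements merged into one kernel-verified Lean document; each statement's English description precedes it below -/
import Mathlib

section
/- Let A be a finite nonempty set of agents, P a set of individual plans, and ω : (A → P) → Prop a predicate on joint plans (ω π meaning the outcome occurs under joint plan π). Fix a joint plan π with ω π. Then either ω holds for every joint plan, or there exists an agent i and a coalition J ⊆ A with i ∈ J such that: (a) every joint plan agreeing with π on J satisfies ω, and (b) some joint plan agreeing with π on J \ {i} does not satisfy ω. -/
theorem ccr_completeness {A P : Type*} [Fintype A] [DecidableEq A] [Nonempty A]
    (ω : (A → P) → Prop) (π : A → P) (hπ : ω π) :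
    (∀ π' : A → P, ω π') ∨
      ∃ (i : A) (J : Finset A), i ∈ J ∧
        (∀ π' : A → P, (∀ j ∈ J, π' j = π j) → ω π') ∧
        (∃ π₂ : A → P, (∀ j ∈ J.erase i, π₂ j = π j) ∧ ¬ ω π₂) := by
  classical
  by_cases h : ∀ π' : A → P, ω π'
  · exact Or.inl h
  · right
    set T : Finset (Finset A) :=
      Finset.univ.filter (fun J : Finset A => ∀ π' : A → P, (∀ j ∈ J, π' j = π j) → ω π')
      with hT
    have hTne : T.Nonempty := by
      refine ⟨Finset.univ, ?_⟩
      simp only [hT, Finset.mem_filter, Finset.mem_univ, true_and]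
      intro π' hag
      have : π' = π := funext fun j => hag j trivial
      rwa [this]
    obtain ⟨J, hJT, hmin⟩ := T.exists_min_image Finset.card hTne
    have hJguar : ∀ π' : A → P, (∀ j ∈ J, π' j = π j) → ω π' := by
      simpa [hT] using hJT
    have hJne : J.Nonempty := by
      rcases Finset.eq_empty_or_nonempty J with he | hne
      · exfalso; exact h fun π' => hJguar π' (by simp [he])
      · exact hne
    obtain ⟨i, hi⟩ := hJne
    refine ⟨i, J, hi, hJguar, ?_⟩
    by_contra hc
    push_neg at hc
    have hmem : J.erase i ∈ T := by
      simp only [hT, Finset.mem_filter, Finset.mem_univ, true_and]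
      intro π' hag
      by_contra hω
      exact hω (hc π' hag) |>.elim
    have := hmin _ hmem
    have hlt : (J.erase i).card < J.card := Finset.card_erase_lt_of_mem hi
    omega
end

section
/- Let A be a finite set of agents, P a set of individual plans, S a set of epistemically possible start states with a distinguished actual state s₀ ∈ S, and ω : S → (A → P) → Prop. Fix an agent i and an individual plan p : P. If i anticipates Causal Contributive Responsibility for ω in p (i.e., there exist s ∈ S and a joint plan π with π i = p such that i bears CCR for ω in (s, π)), then i anticipates Causal Passive Responsibility for ω in p (i.e., there exist s ∈ S and a joint plan π' with π' i = p such that i bears CPR for ω in (s, π')). -/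
theorem anticipated_ccr_implies_anticipated_cpr
    {A P State : Type*} [Fintype A] [DecidableEq A]
    (S : Set State) (s₀ : State) (hs₀ : s₀ ∈ S)
    (ω : State → (A → P) → Prop) (i : A) (p : P)
    (hCCR : ∃ s ∈ S, ∃ π : A → P, π i = p ∧
      (ω s π ∧ ∃ J : Finset A, i ∈ J ∧
        (∀ π' : A → P, (∀ j ∈ J, π' j = π j) → ω s π') ∧
        (∃ π₂ : A → P, (∀ j ∈ J.erase i, π₂ j = π j) ∧ ¬ ω s π₂))) :
    ∃ s ∈ S, ∃ π' : A → P, π' i = p ∧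
      (ω s π' ∧ ∃ π'' : A → P, (∀ j : A, j ≠ i → π'' j = π' j) ∧ ¬ ω s π'') := by
  obtain ⟨s, hs, π, hπi, hω, J, hiJ, hall, π₂, hπ₂, hnω⟩ := hCCR
  refine ⟨s, hs, fun j => if j = i then p else π₂ j, by simp, ?_, π₂, ?_, hnω⟩
  · apply hall
    intro j hj
    by_cases h : j = i
    · simp [h, hπi]
    · simp [h, hπ₂ j (Finset.mem_erase.mpr ⟨h, hj⟩)]
  · intro j hj; simp [hj]
end

section
/- Let A be a finite set of agents, P a set of individual plans, and for each agent i a set S_i of possible start states with a common actual state s₀ ∈ S_i for all i, and ω : State → (A → P) → Prop where State is the type of states. Let π : A → P be a joint plan such that for every agent i, i does not anticipate Causal Passive Responsibility for ¬ω in π i (i.e., there do not exist s ∈ S_i and joint plan π₁ with π₁ i = π i such that ¬ω s π₁ and some π₂ agreeing with π₁ off i has ω s π₂). Then either ¬ω s₀ π' for every joint plan π', or ω s₀ π. -/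
theorem coordination_via_no_anticipated_cpr
    {A P State : Type*} [Fintype A]
    (S : A → Set State) (s₀ : State) (hs₀ : ∀ i : A, s₀ ∈ S i)
    (ω : State → (A → P) → Prop) (π : A → P)
    (h : ∀ i : A, ¬ ∃ s ∈ S i, ∃ π₁ : A → P, π₁ i = π i ∧ ¬ ω s π₁ ∧
        ∃ π₂ : A → P, (∀ j : A, j ≠ i → π₂ j = π₁ j) ∧ ω s π₂) :
    (∀ π' : A → P, ¬ ω s₀ π') ∨ ω s₀ π := by
  classical
  by_contra hc
  push_neg at hc
  obtain ⟨⟨π', hπ'⟩, hπ⟩ := hc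
  -- hybrid plan: use π on coordinates in l, π' elsewhere
  set f : List A → (A → P) := fun l i => if i ∈ l then π i else π' i with hf
  have key : ∀ l : List A, ω s₀ (f l) := by
    intro l
    induction l with
    | nil => simpa [hf] using hπ'
    | cons a l ih =>
      by_contra hω
      apply h a
      refine ⟨s₀, hs₀ a, f (a :: l), ?_, hω, f l, ?_, ih⟩
      · simp [hf]
      · intro j hj
        simp only [hf, List.mem_cons]
        by_cases hjl : j ∈ l <;> simp [hjl, hj]
  have : f (Finset.univ.toList (α := A)) = π := by
    funext i
    simp [hf, Finset.mem_toList]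
  exact hπ (this ▸ key _)
end

section
/- Fix Act = {a₁, a₂}, two agents A₁, A₂, and a single proposition p, so states are Bool (truth value of p). Let τ : Bool → (Fin 2 → Fin 2) → Bool be the transition function defined by: τ s j = true if j A₁ = j A₂ (both agents choose the same action) and τ s j = false otherwise (independent of s). Then there is no 'action theory' γ consisting of functions γ⁺, γ⁻ : Fin 2 × Fin 2 → ({⊤, ⊥, p, ¬p}) (assigning to each agent–action pair a positive and negative effect precondition, each a formula depending only on the current truth value of p and not on the actions performed) whose induced transition function equals τ, where the induced transition sets p true in the next state iff (some agent–action pair executed has its positive precondition true in the current state and no executed pair has its negative precondition true), sets p false iff symmetrically, and leaves p unchanged when executed positive and negative preconditions are both satisfied or both unsatisfied (inertia). -/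
/-- The transition function that sets `p` true iff the two agents choose the same
action, independently of the current state. -/
def tau1 : Bool → (Fin 2 → Fin 2) → Bool := fun _ j => decide (j 0 = j 1)

/-- The transition induced by an action theory whose positive and negative effect
preconditions (for the unique proposition `p`) depend only on the current truth
value of `p`: `p` becomes true if some executed agent–action pair has its positive
precondition satisfied and no executed pair has its negative precondition
satisfied, false in the symmetric case, and is unchanged otherwise (inertia). -/
def inducedNext (γp γn : Fin 2 → Fin 2 → Bool → Bool)
    (s : Bool) (j : Fin 2 → Fin 2) : Bool :=
  let Pos := γp 0 (j 0) s || γp 1 (j 1) s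
  let Neg := γn 0 (j 0) s || γn 1 (j 1) s
  if Pos ∧ ¬ Neg then true
  else if Neg ∧ ¬ Pos then false
  else s

theorem no_action_theory_for_tau1 :
    ¬ ∃ γp γn : Fin 2 → Fin 2 → Bool → Bool,
        ∀ (s : Bool) (j : Fin 2 → Fin 2), inducedNext γp γn s j = tau1 s j := by
  rintro ⟨γp, γn, h⟩
  have h00 := h false ![0, 0]
  have h11 := h false ![1, 1]
  have h01 := h false ![0, 1]
  have h10 := h false ![1, 0]
  simp [inducedNext, tau1] at h00 h11 h01 h10
  obtain ⟨hab, he, hf⟩ := h00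
  obtain ⟨hcd, hg, hi⟩ := h11
  rcases hab with ha | hb
  · exact absurd (h01 (Or.inl ha) he) (by simp [hi])
  · exact absurd (h10 (Or.inr hb) hg) (by simp [hf])
end
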